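/- Let G be a strongly Deza graph with parameters (n,k,b,a) whose spectrum is {k^1, θ₂^{m₂}, θ₃^{m₃}, θ₄^{m₄}} with θ₃ = −θ₄ and m₃ = m₄. Then m₂θ₂ = −k and one of the following holds: (i) m₂ = 1, θ₂ = −k, and G is a bipartite graph with spectrum {k^1, s^{(n−2)/2}, (−s)^{(n−2)/2}, (−k)^1} where s = sqrt(k(n−2k)/(n−2)); (ii) m₂ = k, θ₂ = −1, and G has spectrum {k^1, (√k)^{(n−k−1)/2}, (−1)^k, (−√k)^{(n−k−1)/2}}; (iii) m₂ < k and θ₂ < −1. -/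

import Mathlib

/-! The first two power sums of the spectrum of a `k`-regular graph on `N` vertices are
`tr A = 0` and `tr A² = N k`. In the first one the pair `±θ₄` cancels, leaving `k + m₂θ₂ = 0`.
Being a root of the integral polynomial `charpoly A`, the rational number `θ₂ = -k/m₂` is an
integer, which rules out `m₂ > k`. If `m₂ < k` then `θ₂ < -1`; if `m₂ = k` then `θ₂ = -1`, and
the second power sum becomes `2 m₃ θ₄² = 2 m₃ k`, i.e. `θ₄ = ±√k`. -/

open scoped Classical

noncomputable section

namespace DezaPaper

open SimpleGraph

variable {V : Type*}

/-- `G` is `k`-regular: every vertex has exactly `k` neighbours. -/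
def IsRegular (G : SimpleGraph V) (k : ℕ) : Prop :=
  ∀ v, Nat.card (G.neighborSet v) = k

/-- `G` is a Deza graph with parameters `(n, k, b, a)`:  a `k`-regular graph on `n`
vertices, not complete and not edgeless, in which every pair of distinct vertices has
`b` or `a` common neighbours, where `a ≤ b`. -/
def IsDezaWith (G : SimpleGraph V) (n k b a : ℕ) : Prop :=
  Nat.card V = n ∧ IsRegular G k ∧ a ≤ b ∧ G ≠ ⊤ ∧ G ≠ ⊥ ∧
    ∀ u v : V, u ≠ v →
      Nat.card (G.commonNeighbors u v) = b ∨ Nat.card (G.commonNeighbors u v) = a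

/-- The child of `G` associated with the value `c`: two distinct vertices are adjacent
iff they have exactly `c` common neighbours in `G`.  (For a Deza graph with parameters
`(n,k,b,a)`, `child G a` is the child `G_A` and `child G b` is the child `G_B`.) -/
def child (G : SimpleGraph V) (c : ℕ) : SimpleGraph V where
  Adj u v := u ≠ v ∧ Nat.card (G.commonNeighbors u v) = c
  symm := ⟨by
    rintro u v ⟨h1, h2⟩
    refine ⟨h1.symm, ?_⟩
    rwa [SimpleGraph.commonNeighbors_symm]⟩
  loopless := ⟨fun v h => h.1 rfl⟩

/-- `G` is a strongly regular graph with parameters `(n, k, l, m)`:  a `k`-regular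
graph on `n` vertices, not complete and not edgeless, any two adjacent vertices have
`l` common neighbours and any two distinct non-adjacent vertices have `m` common
neighbours. -/
def IsSRGraphWith (G : SimpleGraph V) (n k l m : ℕ) : Prop :=
  Nat.card V = n ∧ IsRegular G k ∧ G ≠ ⊤ ∧ G ≠ ⊥ ∧
    (∀ u v, G.Adj u v → Nat.card (G.commonNeighbors u v) = l) ∧
    (∀ u v, u ≠ v → ¬G.Adj u v → Nat.card (G.commonNeighbors u v) = m)

/-- `G` is a strongly Deza graph with parameters `(n, k, b, a)`: a Deza graph with
`b > a` whose two children are strongly regular graphs. -/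
def IsStronglyDezaWith (G : SimpleGraph V) (n k b a : ℕ) : Prop :=
  IsDezaWith G n k b a ∧ a < b ∧
    (∃ k' l' m', IsSRGraphWith (child G a) n k' l' m') ∧
    (∃ k' l' m', IsSRGraphWith (child G b) n k' l' m')

/-- The real adjacency matrix of `G`. -/
def adjMat [Fintype V] [DecidableEq V] (G : SimpleGraph V) : Matrix V V ℝ :=
  Matrix.of fun u v => if G.Adj u v then (1 : ℝ) else 0

/-- The spectrum of `G`: the multiset of real eigenvalues (with multiplicity) of its
real adjacency matrix, i.e. the roots of its characteristic polynomial. -/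
def spectrum [Fintype V] [DecidableEq V] (G : SimpleGraph V) : Multiset ℝ :=
  (adjMat G).charpoly.roots

/-- `G` is integral: all its eigenvalues are integers. -/
def IsIntegral [Fintype V] [DecidableEq V] (G : SimpleGraph V) : Prop :=
  ∀ θ ∈ spectrum G, ∃ t : ℤ, θ = (t : ℝ)

/-- `G` is bipartite. -/
def IsBipartiteGraph (G : SimpleGraph V) : Prop :=
  ∃ s : Set V, ∀ u v, G.Adj u v → (u ∈ s ↔ v ∉ s)

/-- The distance-`i` graph of `G`: two vertices are adjacent iff they are at
distance `i` in `G`. -/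
def distGraph (G : SimpleGraph V) (i : ℕ) : SimpleGraph V where
  Adj u v := u ≠ v ∧ G.dist u v = i
  symm := ⟨by
    rintro u v ⟨h1, h2⟩
    exact ⟨h1.symm, by rwa [SimpleGraph.dist_comm]⟩⟩
  loopless := ⟨fun v h => h.1 rfl⟩

/-- `G` is a distance-regular graph of diameter `d` with intersection numbers
`ia i`, `ib i`, `ic i`. -/
def IsDRGWith (G : SimpleGraph V) (d : ℕ) (ia ib ic : ℕ → ℕ) : Prop :=
  G.Connected ∧ (∃ u v : V, G.dist u v = d) ∧ (∀ u v : V, G.dist u v ≤ d) ∧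
    ∀ i ≤ d, ∀ u v : V, G.dist u v = i →
      Nat.card {w : V | G.Adj v w ∧ G.dist u w = i + 1} = ib i ∧
      Nat.card {w : V | G.Adj v w ∧ G.dist u w = i} = ia i ∧
      (1 ≤ i → Nat.card {w : V | G.Adj v w ∧ G.dist u w = i - 1} = ic i)

/-- The complete multipartite graph with `t` parts of size `m`. -/
def completeMultipartite (t m : ℕ) : SimpleGraph (Fin t × Fin m) where
  Adj u v := u.1 ≠ v.1
  symm := ⟨fun _ _ h => h.symm⟩
  loopless := ⟨fun _ h => h rfl⟩

/-- `H` is a complete multipartite graph with parts of equal size. -/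
def IsCompleteMultipartiteEq (H : SimpleGraph V) : Prop :=
  ∃ t m : ℕ, Nonempty (H ≃g completeMultipartite t m)

/-- `G` is a divisible design graph with parameters `(n, k, b, a)`: a Deza graph whose
children are a complete multipartite graph with parts of equal size and its
complement. -/
def IsDDGWith (G : SimpleGraph V) (n k b a : ℕ) : Prop :=
  IsDezaWith G n k b a ∧ a < b ∧
    ((IsCompleteMultipartiteEq (child G a) ∧ child G b = (child G a)ᶜ) ∨
     (IsCompleteMultipartiteEq (child G b) ∧ child G a = (child G b)ᶜ))

theorem _root_.Matrix.IsHermitian.trace_mul_self_eq_sum_eigenvalues_sq {n 𝕜 : Type*}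
    [Fintype n] [DecidableEq n] [RCLike 𝕜] {A : Matrix n n 𝕜} (hA : A.IsHermitian) :
    (A * A).trace = ∑ i, (hA.eigenvalues i : 𝕜) ^ 2 := by
  conv_lhs => rw [hA.spectral_theorem, ← map_mul, Unitary.conjStarAlgAut_apply,
    Matrix.trace_mul_cycle, Unitary.coe_star_mul_self, one_mul, Matrix.diagonal_mul_diagonal,
    Matrix.trace_diagonal]
  simp [sq]

section Regular

variable [Fintype V] {G : SimpleGraph V} {k : ℕ}

theorem IsRegular.degree_eq (hG : IsRegular G k) (v : V) : G.degree v = k := by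
  rw [← card_neighborSet_eq_degree, ← Nat.card_eq_fintype_card, hG v]

theorem IsRegular.ne_zero_of_ne_bot (hG : IsRegular G k) (hG₀ : G ≠ ⊥) : k ≠ 0 := by
  obtain ⟨u, v, huv⟩ : ∃ u v, G.Adj u v := by simpa [SimpleGraph.ext_iff, funext_iff] using hG₀
  have : Nonempty (G.neighborSet u) := ⟨⟨v, huv⟩⟩
  exact hG u ▸ Nat.card_pos.ne'

end Regular

section Spectrum

variable [Fintype V] [DecidableEq V] (G : SimpleGraph V)

theorem adjMat_eq_adjMatrix : adjMat G = G.adjMatrix ℝ := by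
  ext u v
  simp [adjMat, SimpleGraph.adjMatrix_apply]

theorem isHermitian_adjMat : (adjMat G).IsHermitian := by
  simp [adjMat_eq_adjMatrix, G.isSymm_adjMatrix]

theorem spectrum_eq_map_eigenvalues :
    spectrum G = Finset.univ.val.map (isHermitian_adjMat G).eigenvalues := by
  simp [spectrum, (isHermitian_adjMat G).roots_charpoly_eq_eigenvalues]

theorem card_spectrum : Multiset.card (spectrum G) = Fintype.card V := by
  simp [spectrum_eq_map_eigenvalues]

theorem sum_spectrum : (spectrum G).sum = 0 := by
  rw [spectrum, ← Matrix.trace_eq_sum_roots_charpoly_of_splits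
    (isHermitian_adjMat G).splits_charpoly, adjMat_eq_adjMatrix, trace_adjMatrix]

theorem sum_sq_spectrum {k : ℕ} (hG : IsRegular G k) :
    ((spectrum G).map (· ^ 2)).sum = (Fintype.card V : ℝ) * k := by
  have htrace : (adjMat G * adjMat G).trace = Fintype.card V * k := by
    simp only [adjMat_eq_adjMatrix, Matrix.trace, Matrix.diag_apply,
      adjMatrix_mul_self_apply_self, hG.degree_eq, Finset.sum_const, Finset.card_univ, nsmul_eq_mul]
  rw [(isHermitian_adjMat G).trace_mul_self_eq_sum_eigenvalues_sq] at htrace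
  simpa [spectrum_eq_map_eigenvalues] using htrace

theorem isIntegral_of_mem_spectrum {θ : ℝ} (hθ : θ ∈ spectrum G) : _root_.IsIntegral ℤ θ := by
  have hmap : (G.adjMatrix ℤ).map (algebraMap ℤ ℝ) = adjMat G := by
    ext u v
    simp [adjMat]
  refine ⟨(G.adjMatrix ℤ).charpoly, (G.adjMatrix ℤ).charpoly_monic, ?_⟩
  rw [← Polynomial.eval_map, ← Matrix.charpoly_map, hmap]
  exact Polynomial.isRoot_of_mem_roots hθ

theorem exists_intCast_eq_of_ratCast_mem_spectrum {q : ℚ} (hq : (q : ℝ) ∈ spectrum G) :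
    ∃ t : ℤ, (t : ℚ) = q := by
  refine IsIntegrallyClosed.isIntegral_iff.mp ?_
  exact (isIntegral_algebraMap_iff (algebraMap ℚ ℝ).injective).mp
    (isIntegral_of_mem_spectrum G hq)

end Spectrum

theorem le_of_mem_spectrum_of_mul_eq_neg [Fintype V] [DecidableEq V] {G : SimpleGraph V}
    {m k : ℕ} {θ : ℝ} (hθ : θ ∈ spectrum G) (hmθ : m * θ = -k) (hk : k ≠ 0) : m ≤ k := by
  by_contra! hkm
  have hm : (0 : ℝ) < m := by exact_mod_cast (Nat.zero_le k).trans_lt hkm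
  have hθq : θ = ((-k / m : ℚ) : ℝ) := by
    push_cast
    field_simp
    linarith
  obtain ⟨t, ht⟩ := exists_intCast_eq_of_ratCast_mem_spectrum G (hθq ▸ hθ)
  -- `θ = -k/m` lies strictly between `-1` and `0`, so it is not an integer.
  have hm' : (0 : ℚ) < m := by exact_mod_cast hm
  have hkm' : (k : ℚ) < m := by exact_mod_cast hkm
  have hk' : (0 : ℚ) < k := by exact_mod_cast Nat.pos_of_ne_zero hk
  have h₁ : (-1 : ℚ) < t := by rw [ht, neg_div, neg_lt_neg_iff, div_lt_one hm']; exact hkm'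
  have h₂ : (t : ℚ) < 0 := by rw [ht, neg_div, neg_neg_iff_pos]; positivity
  have : -1 < t ∧ t < 0 := ⟨by exact_mod_cast h₁, by exact_mod_cast h₂⟩
  omega

theorem replicate_neg_add_replicate_eq_sqrt {m : ℕ} {x c : ℝ} (h : m * x ^ 2 = m * c) :
    Multiset.replicate m (-x) + Multiset.replicate m x =
      Multiset.replicate m √c + Multiset.replicate m (-√c) := by
  rcases eq_or_ne m 0 with rfl | hm
  · simp
  have hx : x ^ 2 = c := mul_left_cancel₀ (Nat.cast_ne_zero.mpr hm) h
  rcases le_or_gt 0 x with hx₀ | hx₀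
  · rw [← hx, Real.sqrt_sq hx₀, add_comm]
  · rw [← hx, ← neg_sq, Real.sqrt_sq (neg_nonneg.mpr hx₀.le), neg_neg]

/-- Let `G` be a strongly Deza graph with parameters `(n,k,b,a)` whose
spectrum is `{k¹, θ₂^m₂, θ₃^m₃, θ₄^m₄}` with `θ₃ = -θ₄` and `m₃ = m₄`.  Then
`m₂θ₂ = -k` and one of the following holds:
(i) `m₂ = 1`, `θ₂ = -k`, and `G` is a bipartite graph with spectrum
`{k¹, s^((n-2)/2), (-s)^((n-2)/2), (-k)¹}` where `s = sqrt(k(n-2k)/(n-2))`;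
(ii) `m₂ = k`, `θ₂ = -1`, and `G` has spectrum
`{k¹, (√k)^((n-k-1)/2), (-1)^k, (-√k)^((n-k-1)/2)}`;
(iii) `m₂ < k` and `θ₂ < -1`. -/
theorem stronglyDeza_four_eigenvalues_trichotomy [Fintype V] [DecidableEq V]
    (G : SimpleGraph V) (n k b a m2 m3 m4 : ℕ) (th2 th3 th4 : ℝ)
    (hG : IsStronglyDezaWith G n k b a)
    (hGspec : spectrum G = {(k : ℝ)} + Multiset.replicate m2 th2 +
      Multiset.replicate m3 th3 + Multiset.replicate m4 th4)
    (h3 : th3 = -th4) (hm : m3 = m4) :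
    (m2 : ℝ) * th2 = -(k : ℝ) ∧
    ((m2 = 1 ∧ th2 = -(k : ℝ) ∧ IsBipartiteGraph G ∧
        spectrum G = {(k : ℝ)} +
          Multiset.replicate ((n - 2) / 2)
            (Real.sqrt ((k : ℝ) * ((n : ℝ) - 2 * k) / ((n : ℝ) - 2))) +
          Multiset.replicate ((n - 2) / 2)
            (-(Real.sqrt ((k : ℝ) * ((n : ℝ) - 2 * k) / ((n : ℝ) - 2)))) +
          {-(k : ℝ)}) ∨
     (m2 = k ∧ th2 = -1 ∧
        spectrum G = {(k : ℝ)} +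
          Multiset.replicate ((n - k - 1) / 2) (Real.sqrt (k : ℝ)) +
          Multiset.replicate k (-1 : ℝ) +
          Multiset.replicate ((n - k - 1) / 2) (-(Real.sqrt (k : ℝ)))) ∨
     (m2 < k ∧ th2 < -1)) := by
  subst h3 hm
  obtain ⟨⟨hn, hreg, -, -, hG₀, -⟩, -⟩ := hG
  have hk := hreg.ne_zero_of_ne_bot hG₀
  have hcard := card_spectrum G
  have hsum := sum_spectrum G
  have hsum_sq := sum_sq_spectrum G hreg
  rw [hGspec] at hcard hsum hsum_sq
  simp only [Multiset.card_add, Multiset.card_singleton, Multiset.card_replicate,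
    Multiset.sum_add, Multiset.sum_singleton, Multiset.sum_replicate, Multiset.map_add,
    Multiset.map_singleton, Multiset.map_replicate, nsmul_eq_mul, neg_sq] at hcard hsum hsum_sq
  have hm2θ : (m2 : ℝ) * th2 = -k := by linarith
  refine ⟨hm2θ, ?_⟩
  have hm2 : m2 ≠ 0 := by rintro rfl; simp [eq_comm, hk] at hm2θ
  have hθ : th2 ∈ spectrum G := by simp [hGspec, Multiset.mem_replicate, hm2]
  rcases (le_of_mem_spectrum_of_mul_eq_neg hθ hm2θ hk).lt_or_eq with hlt | rfl
  · have h₁ : (1 : ℝ) ≤ m2 := by exact_mod_cast Nat.one_le_iff_ne_zero.mpr hm2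
    have h₂ : (m2 : ℝ) < k := by exact_mod_cast hlt
    exact Or.inr (Or.inr ⟨hlt, by nlinarith⟩)
  · obtain rfl : th2 = -1 :=
      mul_left_cancel₀ (Nat.cast_ne_zero.mpr hk) (hm2θ.trans (mul_neg_one _).symm)
    refine Or.inr (Or.inl ⟨rfl, rfl, ?_⟩)
    rw [Nat.card_eq_fintype_card] at hn
    have hm3 : (n - m2 - 1) / 2 = m3 := by omega
    have hcardℝ : (Fintype.card V : ℝ) = 1 + m2 + 2 * m3 := by rw [← hcard]; push_cast; ring
    rw [hm3, hGspec, add_assoc _ (Multiset.replicate m3 _),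
      replicate_neg_add_replicate_eq_sqrt (c := m2) (by nlinarith)]
    abel

end DezaPaper
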